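/- arXiv:2007.10883 — 2 statements merged into one kernel-verified Lean document; each statement's English description precedes it below -/
import Mathlib

section
/- Let f : [0,1] → [0,1] be continuous, let x ∈ [0,1] satisfy x ≠ f(x) and f(f(x)) = f(x) (so x maps to a fixed point but is not fixed), and suppose x belongs to the closure of sα(y) for some y. Then x ∈ sα(y). -/
open Filter Topology Set

/-- A backward orbit branch of `x`: `u 0 = x` and `f (u (n+1)) = u n`. -/
def IsBackwardBranch {X : Type*} (f : X → X) (x : X) (u : ℕ → X) : Prop :=
  u 0 = x ∧ ∀ n, f (u (n + 1)) = u n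

/-- The special α-limit set of `x`: accumulation points of backward orbit branches. -/
def sAlpha {X : Type*} [TopologicalSpace X] (f : X → X) (x : X) : Set X :=
  {y | ∃ u : ℕ → X, IsBackwardBranch f x u ∧ MapClusterPt y atTop u}

/-- The α-limit set of `x`: accumulation points of preimage sequences. -/
def alphaLimit {X : Type*} [TopologicalSpace X] (f : X → X) (x : X) : Set X :=
  {y | ∃ u : ℕ → X, (∀ n, f^[n] (u n) = x) ∧ MapClusterPt y atTop u}

/-!
Write `p = f x`. A limit of chains `z, e, e', …` (`f e = z`, `f e' = e`, …) of cluster points of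
single backward branches of `y`, taken in the compact space `[0,1]^ℕ`, is a backward orbit
`x = t 0, t 1, t 2, …` any two points of which are approximated by cluster points of one branch
of `y`. These points are distinct and differ from `p`, so one of them, `θ = t i`, lies strictly
between `p` and another, `φ`. Since `f^[g] θ = p` for `g > i`, the intermediate value theorem for
`f^[g]` between `θ` and a point of a branch `u` near `θ` whose `g`-th image is near `φ` lifts any
point near `θ` to a point near `θ` whose `i`-th image is near `x`. Iterating these lifts builds a
backward branch of `y` accumulating at `x`.
-/

open Function

section Branches

variable {X : Type*} {f : X → X}

theorem iterate_apply_add_of_apply_succ {u : ℕ → X} (hu : ∀ n, f (u (n + 1)) = u n)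
    (n k : ℕ) : f^[k] (u (n + k)) = u n := by
  induction k with
  | zero => rfl
  | succ k ih => rw [← add_assoc, iterate_succ_apply, hu, ih]

theorem IsBackwardBranch.iterate_apply {y : X} {u : ℕ → X} (hu : IsBackwardBranch f y u)
    (n : ℕ) : f^[n] (u n) = y := by
  simpa [hu.1] using iterate_apply_add_of_apply_succ hu.2 0 n

theorem exists_apply_succ_of_subset_image {C : Set X} (hC : C ⊆ f '' C) {z : X} (hz : z ∈ C) :
    ∃ t : ℕ → X, t 0 = z ∧ (∀ n, f (t (n + 1)) = t n) ∧ ∀ n, t n ∈ C := by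
  have hlift : ∀ c : C, ∃ e : C, f e = c := fun c => by
    obtain ⟨e, he, hfe⟩ := hC c.2
    exact ⟨⟨e, he⟩, hfe⟩
  choose g hg using hlift
  exact ⟨fun n => g^[n] ⟨z, hz⟩, rfl, fun n => by simp only [iterate_succ_apply', hg],
    fun n => (g^[n] _).2⟩

theorem injective_and_ne_of_apply_succ {x : X} (hx : x ≠ f x) (hfx : IsFixedPt f (f x))
    {t : ℕ → X} (h0 : t 0 = x) (ht : ∀ n, f (t (n + 1)) = t n) :
    Injective t ∧ ∀ n, t n ≠ f x := by
  have hiter : ∀ n, f^[n] (t n) = x := by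
    simpa [h0] using iterate_apply_add_of_apply_succ ht 0
  refine ⟨.of_lt_imp_ne fun i j hij hteq => hx ?_, fun n htn => hx ?_⟩
  · obtain ⟨k, rfl⟩ := Nat.exists_eq_add_of_lt hij
    calc x = f^[k + 1] (f^[i] (t i)) := by
          rw [← iterate_add_apply, add_comm, ← add_assoc, hteq, hiter]
      _ = f x := by rw [hiter, iterate_succ_apply, hfx.iterate]
  · calc x = f^[n] (t n) := (hiter n).symm
      _ = f x := by rw [htn, (hfx.iterate n).eq]

theorem exists_isBackwardBranch_of_chain {y : X} {s : ℕ → X} {d : ℕ → ℕ} (hd : StrictMono d)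
    (h0 : f^[d 0] (s 0) = y) (hs : ∀ k, f^[d (k + 1) - d k] (s (k + 1)) = s k) :
    ∃ u, IsBackwardBranch f y u ∧ ∀ k, ∀ m ≤ d k, u (d k - m) = f^[m] (s k) := by
  have hchain : ∀ k l, k ≤ l → f^[d l - d k] (s l) = s k := by
    intro k l hkl
    induction l, hkl using Nat.le_induction with
    | base => simp
    | succ l hkl ih =>
      have := hd.monotone hkl
      have := hd (Nat.lt_add_one l)
      rw [show d (l + 1) - d k = (d l - d k) + (d (l + 1) - d l) by omega, iterate_add_apply, hs,
        ih]
  have hcons : ∀ k l n, n ≤ d k → n ≤ d l → f^[d k - n] (s k) = f^[d l - n] (s l) := by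
    suffices ∀ k l n, k ≤ l → n ≤ d k → f^[d k - n] (s k) = f^[d l - n] (s l) from
      fun k l n hk hl => (le_total k l).elim (this k l n · hk) fun h => (this l k n h hl).symm
    intro k l n hkl hk
    have := hd.monotone hkl
    rw [show d l - n = (d k - n) + (d l - d k) by omega, iterate_add_apply, hchain k l hkl]
  refine ⟨fun n => f^[d n - n] (s n), ⟨by simpa using h0, fun n => ?_⟩, fun k m hm => ?_⟩
  · have := hd.le_apply (x := n + 1)
    rw [← iterate_succ_apply' f, show (d (n + 1) - (n + 1)).succ = d (n + 1) - n by omega]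
    exact hcons _ _ _ (by omega) hd.le_apply
  · dsimp only
    rw [hcons (d k - m) k _ hd.le_apply (Nat.sub_le _ _), Nat.sub_sub_self hm]

end Branches

section Topology

variable {X : Type*} [TopologicalSpace X] {f : X → X}

def sAlphaPairs (f : X → X) (y : X) : Set (X × X) :=
  {q | ∃ u, IsBackwardBranch f y u ∧ MapClusterPt q.1 atTop u ∧ MapClusterPt q.2 atTop u}

def clusterChains (f : X → X) (y : X) : Set (ℕ → X) :=
  {t | (∀ n, f (t (n + 1)) = t n) ∧ ∃ u, IsBackwardBranch f y u ∧ ∀ n, MapClusterPt (t n) atTop u}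

theorem exists_frequently_of_mem_closure_sAlphaPairs {y a b : X}
    (h : (a, b) ∈ closure (sAlphaPairs f y)) {U V : Set X} (hU : U ∈ 𝓝 a) (hV : V ∈ 𝓝 b) :
    ∃ u, IsBackwardBranch f y u ∧ (∃ᶠ n in atTop, u n ∈ U) ∧ ∃ᶠ n in atTop, u n ∈ V := by
  obtain ⟨q, ⟨hqU, hqV⟩, u, hu, hq₁, hq₂⟩ := mem_closure_iff_nhds.1 h _
    (prod_mem_nhds (interior_mem_nhds.2 hU) (interior_mem_nhds.2 hV))
  exact ⟨u, hu,
    (mapClusterPt_iff_frequently.1 hq₁ _ (isOpen_interior.mem_nhds hqU)).mono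
      fun _ => (interior_subset ·),
    (mapClusterPt_iff_frequently.1 hq₂ _ (isOpen_interior.mem_nhds hqV)).mono
      fun _ => (interior_subset ·)⟩

theorem mk_mem_closure_sAlphaPairs {y : X} {t : ℕ → X} (ht : t ∈ closure (clusterChains f y))
    (i j : ℕ) : (t i, t j) ∈ closure (sAlphaPairs f y) :=
  map_mem_closure (f := fun t : ℕ → X => (t i, t j)) (by fun_prop) ht
    fun _ ⟨_, u, hu, hc⟩ => ⟨u, hu, hc i, hc j⟩

theorem apply_succ_of_mem_closure_clusterChains [T2Space X] (hf : Continuous f) {y : X} {t : ℕ → X}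
    (ht : t ∈ closure (clusterChains f y)) (n : ℕ) : f (t (n + 1)) = t n :=
  closure_minimal (t := {t : ℕ → X | f (t (n + 1)) = t n}) (fun _ ht => ht.1 n)
    (isClosed_eq (by fun_prop) (by fun_prop)) ht

theorem exists_apply_eq_mapClusterPt [CompactSpace X] [T2Space X] (hf : Continuous f)
    {u : ℕ → X} (hu : ∀ n, f (u (n + 1)) = u n) {c : X} (hc : MapClusterPt c atTop u) :
    ∃ e, f e = c ∧ MapClusterPt e atTop u := by
  obtain ⟨U, hU, hUc⟩ := mapClusterPt_iff_ultrafilter.1 hc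
  set e := (U.map fun n => u (n + 1)).lim
  have he : Tendsto (fun n => u (n + 1)) U (𝓝 e) := (U.map _).le_nhds_lim
  refine ⟨e, tendsto_nhds_unique ?_ hUc, ?_⟩
  · simpa only [comp_def, hu] using (hf.tendsto e).comp he
  · exact MapClusterPt.of_comp ((tendsto_add_atTop_nat 1).mono_left hU) he.mapClusterPt

theorem closure_sAlpha_subset_image_closure_clusterChains [CompactSpace X] [T2Space X]
    (hf : Continuous f) (y : X) :
    closure (sAlpha f y) ⊆ (fun t : ℕ → X => t 0) '' closure (clusterChains f y) := by
  refine closure_minimal ?_ (isClosed_closure.isCompact.image (continuous_apply 0)).isClosed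
  rintro z ⟨u, hu, hz⟩
  obtain ⟨t, rfl, ht, htu⟩ := exists_apply_succ_of_subset_image (C := {c | MapClusterPt c atTop u})
    (fun c hc => (exists_apply_eq_mapClusterPt hf hu.2 hc).imp fun _ he => ⟨he.2, he.1⟩) hz
  exact ⟨t, subset_closure ⟨ht, u, hu, htu⟩, rfl⟩

theorem mem_sAlpha_of_forall_exists_preimage [FirstCountableTopology X] {x y s₀ : X}
    {A : Set X} {d₀ : ℕ} (hs₀ : s₀ ∈ A) (hy : f^[d₀] s₀ = y)
    (hstep : ∀ s ∈ A, ∀ N ∈ 𝓝 x, ∃ s' ∈ A, ∃ g, ∃ m < g, f^[g] s' = s ∧ f^[m] s' ∈ N) :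
    x ∈ sAlpha f y := by
  obtain ⟨V, hV⟩ := (𝓝 x).exists_antitone_basis
  choose next hnextA g m hmg hg hm using hstep
  let node : ℕ → A := fun k =>
    Nat.rec ⟨s₀, hs₀⟩ (fun k s => ⟨next s s.2 (V k) (hV.mem k), hnextA _ _ _ _⟩) k
  let gap : ℕ → ℕ := fun k => g (node k).1 (node k).2 (V k) (hV.mem k)
  let visit : ℕ → ℕ := fun k => m (node k).1 (node k).2 (V k) (hV.mem k)
  let d : ℕ → ℕ := fun k => d₀ + ∑ i ∈ Finset.range k, gap i
  have hd : ∀ k, d (k + 1) = d k + gap k := fun k => by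
    simp only [d, Finset.sum_range_succ, add_assoc]
  have hvisit : ∀ k, visit k < gap k := fun k => hmg _ _ _ _
  have hdmono : StrictMono d := strictMono_nat_of_lt_succ fun k => by
    have := hvisit k; rw [hd]; omega
  obtain ⟨u, hu, hus⟩ := exists_isBackwardBranch_of_chain (f := f) (s := fun k => (node k).1)
    hdmono (by simpa [d, node] using hy) fun k => by
      rw [hd, add_tsub_cancel_left]; exact hg _ _ _ _
  let τ : ℕ → ℕ := fun k => d (k + 1) - visit k
  have hτ : Tendsto τ atTop atTop := tendsto_atTop_mono (fun k => show k ≤ d (k + 1) - visit k by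
    have := hdmono.le_apply (x := k); have := hvisit k; have := hd k; omega) tendsto_id
  have huτ : ∀ k, u (τ k) ∈ V k := fun k => by
    rw [hus (k + 1) (visit k) (by have := hvisit k; have := hd k; omega)]
    exact hm _ _ _ _
  exact ⟨u, hu, MapClusterPt.of_comp hτ (hV.tendsto huτ).mapClusterPt⟩

end Topology

theorem exists_lt_lt_of_injective {X : Type*} [LinearOrder X] {p : X} {t : ℕ → X}
    (ht : Injective t) (hp : ∀ n, t n ≠ p) :
    ∃ i j, p < t i ∧ t i < t j ∨ t j < t i ∧ t i < p := by
  obtain ⟨i, j, hij, hside⟩ := Finite.exists_ne_map_eq_of_infinite fun n => t n < p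
  wlog hlt : t i < t j generalizing i j
  · exact this j i hij.symm hside.symm ((ht.ne hij).lt_or_gt.resolve_left hlt)
  by_cases hj : t j < p
  · exact ⟨j, i, .inr ⟨hlt, hj⟩⟩
  · have hi : ¬t i < p := hside ▸ hj
    exact ⟨i, j, .inl ⟨(not_lt.1 hi).lt_of_ne (hp i).symm, hlt⟩⟩

section Interval

variable {X : Type*} [ConditionallyCompleteLinearOrder X] [TopologicalSpace X] [OrderTopology X]
  [DenselyOrdered X] [FirstCountableTopology X] {f : X → X}

theorem mem_sAlpha_of_lt_of_lt (hf : Continuous f) {x y p θ φ : X} {M : ℕ} (hfx : f x = p)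
    (hp : IsFixedPt f p) (hθ : f^[M] θ = x) (hpθ : p < θ) (hθφ : θ < φ)
    (hacc : (θ, φ) ∈ closure (sAlphaPairs f y)) : x ∈ sAlpha f y := by
  obtain ⟨a, hpa, haθ⟩ := exists_between hpθ
  obtain ⟨b, hθb, hbφ⟩ := exists_between hθφ
  have hθp : ∀ g, M < g → f^[g] θ = p := fun g hg => by
    obtain ⟨k, rfl⟩ := Nat.exists_eq_add_of_lt hg
    rw [show M + k + 1 = k + (M + 1) by ring, iterate_add_apply, iterate_succ_apply', hθ, hfx,
      (hp.iterate k).eq]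
  obtain ⟨u, hu, hnear, -⟩ :=
    exists_frequently_of_mem_closure_sAlphaPairs hacc (Ioo_mem_nhds haθ hθb) (Ioi_mem_nhds hbφ)
  obtain ⟨n, hn⟩ := hnear.exists
  refine mem_sAlpha_of_forall_exists_preimage hn (hu.iterate_apply n) fun s hs N hN => ?_
  have hW : Ioo a b ∩ f^[M] ⁻¹' N ∈ 𝓝 θ :=
    inter_mem (Ioo_mem_nhds haθ hθb) ((hf.iterate M).continuousAt.preimage_mem_nhds (hθ ▸ hN))
  obtain ⟨l, r, hθlr, hlr⟩ := (mem_nhds_iff_exists_Ioo_subset' ⟨p, hpθ⟩ ⟨φ, hθφ⟩).1 hW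
  obtain ⟨u, hu, hnear, hfar⟩ := exists_frequently_of_mem_closure_sAlphaPairs hacc
    (Ioo_mem_nhds hθlr.1 hθlr.2) (Ioi_mem_nhds hbφ)
  obtain ⟨t₁, ht₁⟩ := hfar.exists
  obtain ⟨t₂, ht₁₂, ht₂⟩ := frequently_atTop.1 hnear (t₁ + M + 1)
  obtain ⟨g, rfl⟩ : ∃ g, t₂ = t₁ + g := ⟨t₂ - t₁, by omega⟩
  have hg : M < g := by omega
  -- `f^[g]` sends `θ` to `p` and `u (t₁ + g)` beyond `b`, so by the intermediate value theorem
  -- it sends a point between them onto `s`.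
  obtain ⟨s', hs', hs's⟩ := intermediate_value_uIcc (hf.iterate g).continuousOn
    (a := θ) (b := u (t₁ + g)) (by
      rw [hθp g hg, iterate_apply_add_of_apply_succ hu.2]
      exact Icc_subset_uIcc ⟨(hpa.trans hs.1).le, (hs.2.trans ht₁).le⟩)
  have hs'W := hlr (ordConnected_Ioo.uIcc_subset hθlr ht₂ hs')
  exact ⟨s', hs'W.1, g, M, hg, hs's, hs'W.2⟩

theorem mem_sAlpha_of_between (hf : Continuous f) {x y p θ φ : X} {M : ℕ} (hfx : f x = p)
    (hp : IsFixedPt f p) (hθ : f^[M] θ = x) (hθφ : p < θ ∧ θ < φ ∨ φ < θ ∧ θ < p)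
    (hacc : (θ, φ) ∈ closure (sAlphaPairs f y)) : x ∈ sAlpha f y := by
  rcases hθφ with ⟨hpθ, hθφ⟩ | ⟨hφθ, hθp⟩
  · exact mem_sAlpha_of_lt_of_lt hf hfx hp hθ hpθ hθφ hacc
  · exact mem_sAlpha_of_lt_of_lt (X := Xᵒᵈ) hf hfx hp hθ hθp hφθ hacc

end Interval

theorem stmt8 (f : unitInterval → unitInterval) (hf : Continuous f)
    (x y : unitInterval) (hx1 : x ≠ f x) (hx2 : f (f x) = f x)
    (hcl : x ∈ closure (sAlpha f y)) :
    x ∈ sAlpha f y := by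
  obtain ⟨t, ht, rfl⟩ := closure_sAlpha_subset_image_closure_clusterChains hf y hcl
  have hsucc := apply_succ_of_mem_closure_clusterChains hf ht
  obtain ⟨hinj, hne⟩ := injective_and_ne_of_apply_succ hx1 hx2 rfl hsucc
  obtain ⟨i, j, hij⟩ := exists_lt_lt_of_injective hinj hne
  exact mem_sAlpha_of_between hf rfl hx2 (by simpa using iterate_apply_add_of_apply_succ hsucc 0 i)
    hij (mk_mem_closure_sAlphaPairs ht i j)
end

section
/- Let X be a compact metric space and f : X → X continuous. If y ∈ sα(x), then the entire ω-limit set ω(y) is contained in sα(x); consequently sα(x) contains the forward orbit closure of each of its points minus possibly finitely many initial points, and sα(x) is forward invariant in the sense that f(sα(x)) = sα(x). -/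
/-!
For a backward branch `u` of `x`, the relation `f (u (n + 1)) = u n` says that `f` maps the
shifted sequence onto `u`. Since shifting does not change cluster points, continuity of `f` makes
the (closed) set of cluster points of `u` forward invariant, so it contains the closure of the
forward orbit of each of its points, in particular their ω-limit sets. On a compact Hausdorff space
`f` is moreover a proper map, so every cluster point of `u = f ∘ (u ∘ succ)` is the image of a
cluster point of `u ∘ succ`, i.e. of `u`; this gives `f '' sα(x) = sα(x)`.
-/

open Filter Topology Set

theorem mapClusterPt_atTop_comp_add_nat_iff {X : Type*} [TopologicalSpace X] {u : ℕ → X}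
    {y : X} (k : ℕ) : MapClusterPt y atTop (fun n => u (n + k)) ↔ MapClusterPt y atTop u := by
  rw [show (fun n => u (n + k)) = u ∘ (· + k) from rfl, mapClusterPt_comp, map_add_atTop_eq_nat]

theorem MapClusterPt.mem_closure_range {X ι : Type*} [TopologicalSpace X] {F : Filter ι}
    {u : ι → X} {y : X} (h : MapClusterPt y F u) : y ∈ closure (range u) :=
  mem_closure_iff_clusterPt.2 <|
    h.clusterPt.mono <| tendsto_principal.2 <| Eventually.of_forall mem_range_self

namespace IsBackwardBranch

variable {X : Type*} {f : X → X} {x : X} {u : ℕ → X}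

theorem comp_shift (hu : IsBackwardBranch f x u) : f ∘ (fun n => u (n + 1)) = u :=
  funext hu.2

variable [TopologicalSpace X]

theorem mapClusterPt_apply (hf : Continuous f) (hu : IsBackwardBranch f x u) {y : X}
    (hy : MapClusterPt y atTop u) : MapClusterPt (f y) atTop u := by
  have h := ((mapClusterPt_atTop_comp_add_nat_iff 1).2 hy).continuousAt_comp hf.continuousAt
  rwa [hu.comp_shift] at h

theorem exists_mapClusterPt_apply_eq [CompactSpace X] [T2Space X] (hf : Continuous f)
    (hu : IsBackwardBranch f x u) {y : X} (hy : MapClusterPt y atTop u) :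
    ∃ w, MapClusterPt w atTop u ∧ f w = y := by
  rw [← hu.comp_shift, mapClusterPt_comp] at hy
  obtain ⟨w, hwy, hw⟩ := hf.isProperMap.clusterPt_of_mapClusterPt hy
  exact ⟨w, (mapClusterPt_atTop_comp_add_nat_iff 1).1 hw, hwy⟩

end IsBackwardBranch

section sAlpha

variable {X : Type*} [TopologicalSpace X] {f : X → X} {x : X}

theorem closure_range_iterate_subset_sAlpha (hf : Continuous f) {y : X} (hy : y ∈ sAlpha f x) :
    closure (range fun n => f^[n] y) ⊆ sAlpha f x := by
  obtain ⟨u, hu, hyu⟩ := hy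
  have hinv : MapsTo f {z | MapClusterPt z atTop u} {z | MapClusterPt z atTop u} :=
    fun _ hz => hu.mapClusterPt_apply hf hz
  have horbit : (range fun n => f^[n] y) ⊆ {z | MapClusterPt z atTop u} :=
    range_subset_iff.2 fun n => hinv.iterate n hyu
  exact (closure_minimal horbit isClosed_setOfPred_clusterPt).trans fun _ hz => ⟨u, hu, hz⟩

theorem image_sAlpha [CompactSpace X] [T2Space X] (hf : Continuous f) :
    f '' sAlpha f x = sAlpha f x := by
  refine Subset.antisymm ?_ fun y ⟨u, hu, hyu⟩ => ?_
  · rintro _ ⟨y, ⟨u, hu, hyu⟩, rfl⟩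
    exact ⟨u, hu, hu.mapClusterPt_apply hf hyu⟩
  · obtain ⟨w, hwu, rfl⟩ := hu.exists_mapClusterPt_apply_eq hf hyu
    exact mem_image_of_mem f ⟨u, hu, hwu⟩

end sAlpha

theorem stmt19 {X : Type*} [MetricSpace X] [CompactSpace X] (f : X → X)
    (hf : Continuous f) (x : X) :
    (∀ y ∈ sAlpha f x, {z | MapClusterPt z atTop fun n => f^[n] y} ⊆ sAlpha f x) ∧
    (∀ y ∈ sAlpha f x, ∃ N : ℕ, closure {z | ∃ n, N ≤ n ∧ z = f^[n] y} ⊆ sAlpha f x) ∧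
    f '' sAlpha f x = sAlpha f x := by
  refine ⟨fun y hy z hz => ?_, fun y hy => ⟨0, ?_⟩, image_sAlpha hf⟩
  · exact closure_range_iterate_subset_sAlpha hf hy hz.mem_closure_range
  · refine (closure_mono ?_).trans (closure_range_iterate_subset_sAlpha hf hy)
    rintro _ ⟨n, -, rfl⟩
    exact mem_range_self n
end
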